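/- arXiv:0911.5585 — 3 statements merged into one kernel-verified Lean document; each statement's English description precedes it below -/
import Mathlib

section
/- Let H be a Hopf algebra over ℂ and let I₁, I₂ be Hopf ideals of H such that I₁ ∩ I₂ does not contain any non-zero Hopf ideal. Assume that for k = 1, 2 the quotient Hopf algebra H/Iₖ is inner linear, i.e. there exists a two-sided ideal Kₖ of H with Iₖ ⊆ Kₖ and dim_ℂ(H/Kₖ) < ∞ such that every Hopf ideal J of H with J ⊆ Kₖ satisfies J ⊆ Iₖ. Then H is inner linear. -/
open scoped TensorProduct

section Defs

variable {H : Type*} [Ring H] [HopfAlgebra ℂ H]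

/-- The subspace `P ⊗ Q` of `H ⊗ H`. -/
noncomputable def subTensor (P Q : Submodule ℂ H) : Submodule ℂ (H ⊗[ℂ] H) :=
  LinearMap.range (TensorProduct.map P.subtype Q.subtype)

/-- A two-sided ideal (as a `ℂ`-subspace closed under left and right multiplication). -/
structure IsTwoSidedIdealSub (I : Submodule ℂ H) : Prop where
  mul_mem_left : ∀ (x : H) ⦃a : H⦄, a ∈ I → x * a ∈ I
  mul_mem_right : ∀ ⦃a : H⦄ (x : H), a ∈ I → a * x ∈ I

/-- A Hopf ideal: a two-sided ideal `I` with `ε(I) = 0`, `Δ(I) ⊆ I⊗H + H⊗I` and `S(I) ⊆ I`. -/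
structure IsHopfIdeal (I : Submodule ℂ H) extends IsTwoSidedIdealSub I : Prop where
  counit_eq_zero : ∀ a ∈ I, Coalgebra.counit (R := ℂ) a = 0
  comul_mem : ∀ a ∈ I, Coalgebra.comul (R := ℂ) a ∈ subTensor I ⊤ ⊔ subTensor ⊤ I
  antipode_mem : ∀ a ∈ I, HopfAlgebra.antipode (R := ℂ) a ∈ I

/-- Inner faithfulness of an algebra representation: the kernel contains no nonzero Hopf ideal. -/
def InnerFaithful {A : Type*} [Semiring A] [Algebra ℂ A] (π : H →ₐ[ℂ] A) : Prop :=
  ∀ J : Submodule ℂ H, IsHopfIdeal J → (∀ x ∈ J, π x = 0) → J = ⊥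

/-- Inner linearity: there is a two-sided ideal of finite codimension containing no nonzero
Hopf ideal. -/
def InnerLinear (H : Type*) [Ring H] [HopfAlgebra ℂ H] : Prop :=
  ∃ I : Submodule ℂ H, IsTwoSidedIdealSub I ∧ FiniteDimensional ℂ (H ⧸ I) ∧
    ∀ J : Submodule ℂ H, IsHopfIdeal J → J ≤ I → J = ⊥

end Defs

theorem IsTwoSidedIdealSub.inf {H : Type*} [Ring H] [HopfAlgebra ℂ H] {P Q : Submodule ℂ H}
    (hP : IsTwoSidedIdealSub P) (hQ : IsTwoSidedIdealSub Q) : IsTwoSidedIdealSub (P ⊓ Q) where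
  mul_mem_left x _ ha := ⟨hP.mul_mem_left x ha.1, hQ.mul_mem_left x ha.2⟩
  mul_mem_right _ x ha := ⟨hP.mul_mem_right x ha.1, hQ.mul_mem_right x ha.2⟩

theorem stmt2_general (H : Type*) [Ring H] [HopfAlgebra ℂ H]
    (I₁ I₂ : Submodule ℂ H)
    (hmin : ∀ J : Submodule ℂ H, IsHopfIdeal J → J ≤ I₁ ⊓ I₂ → J = ⊥)
    (K₁ : Submodule ℂ H) (hK₁ : IsTwoSidedIdealSub K₁)
    (hfd₁ : FiniteDimensional ℂ (H ⧸ K₁))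
    (hfa₁ : ∀ J : Submodule ℂ H, IsHopfIdeal J → J ≤ K₁ → J ≤ I₁)
    (K₂ : Submodule ℂ H) (hK₂ : IsTwoSidedIdealSub K₂)
    (hfd₂ : FiniteDimensional ℂ (H ⧸ K₂))
    (hfa₂ : ∀ J : Submodule ℂ H, IsHopfIdeal J → J ≤ K₂ → J ≤ I₂) :
    InnerLinear H := by
  refine ⟨K₁ ⊓ K₂, hK₁.inf hK₂, Submodule.CoFG.inf hfd₁ hfd₂, fun J hJ hJK => hmin J hJ ?_⟩
  exact le_inf (hfa₁ J hJ (hJK.trans inf_le_left)) (hfa₂ J hJ (hJK.trans inf_le_right))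

theorem stmt2 (H : Type*) [Ring H] [HopfAlgebra ℂ H]
    (I₁ I₂ : Submodule ℂ H) (hI₁ : IsHopfIdeal I₁) (hI₂ : IsHopfIdeal I₂)
    (hmin : ∀ J : Submodule ℂ H, IsHopfIdeal J → J ≤ I₁ ⊓ I₂ → J = ⊥)
    (K₁ : Submodule ℂ H) (hK₁ : IsTwoSidedIdealSub K₁) (hIK₁ : I₁ ≤ K₁)
    (hfd₁ : FiniteDimensional ℂ (H ⧸ K₁))
    (hfa₁ : ∀ J : Submodule ℂ H, IsHopfIdeal J → J ≤ K₁ → J ≤ I₁)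
    (K₂ : Submodule ℂ H) (hK₂ : IsTwoSidedIdealSub K₂) (hIK₂ : I₂ ≤ K₂)
    (hfd₂ : FiniteDimensional ℂ (H ⧸ K₂))
    (hfa₂ : ∀ J : Submodule ℂ H, IsHopfIdeal J → J ≤ K₂ → J ≤ I₂) :
    InnerLinear H :=
  stmt2_general H I₁ I₂ hmin K₁ hK₁ hfd₁ hfa₁ K₂ hK₂ hfd₂ hfa₂
end

section
/- Let H be a Hopf algebra over ℂ and let I₁, I₂ be Hopf ideals of H. Assume that the algebra map θ : H → H/I₁ ⊗ H/I₂, x ↦ (π₁⊗π₂)(Δ(x)) (π₁, π₂ the canonical projections), is injective; equivalently, every x ∈ H with Δ(x) ∈ I₁⊗H + H⊗I₂ is zero. Assume moreover that for k = 1, 2 the quotient Hopf algebra H/Iₖ is inner linear, i.e. there exists a two-sided ideal Kₖ of H with Iₖ ⊆ Kₖ and dim_ℂ(H/Kₖ) < ∞ such that every Hopf ideal J of H with J ⊆ Kₖ satisfies J ⊆ Iₖ. Then H is inner linear. -/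
open scoped TensorProduct

/-!
The ideal `K₁ ∩ K₂` witnesses inner linearity. It has finite codimension, since `H ⧸ (K₁ ⊓ K₂)`
embeds into `H ⧸ K₁ × H ⧸ K₂`. A Hopf ideal `J ≤ K₁ ⊓ K₂` lies in `I₁` and in `I₂` by inner
linearity of the two quotients, so `Δ(J) ⊆ J ⊗ H + H ⊗ J ⊆ I₁ ⊗ H + H ⊗ I₂`, and injectivity
of `(π₁ ⊗ π₂) ∘ Δ` forces `J = 0`.
-/

theorem Submodule.finite_quotient_inf {R M : Type*} [Ring R] [IsNoetherianRing R]
    [AddCommGroup M] [Module R M] (p q : Submodule R M)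
    [Module.Finite R (M ⧸ p)] [Module.Finite R (M ⧸ q)] :
    Module.Finite R (M ⧸ (p ⊓ q)) := by
  have hker : LinearMap.ker (p.mkQ.prod q.mkQ) = p ⊓ q := by
    rw [LinearMap.ker_prod, Submodule.ker_mkQ, Submodule.ker_mkQ]
  refine Module.Finite.of_injective ((p ⊓ q).liftQ (p.mkQ.prod q.mkQ) hker.ge) ?_
  rw [← LinearMap.ker_eq_bot]
  exact Submodule.ker_liftQ_eq_bot _ _ _ hker.le

section HopfIdeals

variable {H : Type*} [Ring H] [HopfAlgebra ℂ H]

theorem IsTwoSidedIdealSub.inf_s3 {K₁ K₂ : Submodule ℂ H} (h₁ : IsTwoSidedIdealSub K₁)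
    (h₂ : IsTwoSidedIdealSub K₂) : IsTwoSidedIdealSub (K₁ ⊓ K₂) where
  mul_mem_left x _ ha := ⟨h₁.mul_mem_left x ha.1, h₂.mul_mem_left x ha.2⟩
  mul_mem_right _ x ha := ⟨h₁.mul_mem_right x ha.1, h₂.mul_mem_right x ha.2⟩

theorem subTensor_mono {P P' Q Q' : Submodule ℂ H} (hP : P ≤ P') (hQ : Q ≤ Q') :
    subTensor P Q ≤ subTensor P' Q' := by
  have hPP' : P.subtype = P'.subtype ∘ₗ Submodule.inclusion hP := rfl
  have hQQ' : Q.subtype = Q'.subtype ∘ₗ Submodule.inclusion hQ := rfl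
  rw [subTensor, hPP', hQQ', TensorProduct.map_comp]
  exact LinearMap.range_comp_le_range _ _

theorem IsHopfIdeal.comul_mem_of_le {J I₁ I₂ : Submodule ℂ H} (hJ : IsHopfIdeal J)
    (h₁ : J ≤ I₁) (h₂ : J ≤ I₂) {x : H} (hx : x ∈ J) :
    Coalgebra.comul (R := ℂ) x ∈ subTensor I₁ ⊤ ⊔ subTensor ⊤ I₂ :=
  sup_le_sup (subTensor_mono h₁ le_rfl) (subTensor_mono le_rfl h₂) (hJ.comul_mem x hx)

end HopfIdeals

theorem stmt3_general (H : Type*) [Ring H] [HopfAlgebra ℂ H]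
    (I₁ I₂ : Submodule ℂ H)
    (hinj : ∀ x : H, Coalgebra.comul (R := ℂ) x ∈ subTensor I₁ ⊤ ⊔ subTensor ⊤ I₂ → x = 0)
    (K₁ : Submodule ℂ H) (hK₁ : IsTwoSidedIdealSub K₁)
    (hfd₁ : FiniteDimensional ℂ (H ⧸ K₁))
    (hfa₁ : ∀ J : Submodule ℂ H, IsHopfIdeal J → J ≤ K₁ → J ≤ I₁)
    (K₂ : Submodule ℂ H) (hK₂ : IsTwoSidedIdealSub K₂)
    (hfd₂ : FiniteDimensional ℂ (H ⧸ K₂))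
    (hfa₂ : ∀ J : Submodule ℂ H, IsHopfIdeal J → J ≤ K₂ → J ≤ I₂) :
    InnerLinear H := by
  refine ⟨K₁ ⊓ K₂, hK₁.inf_s3 hK₂, Submodule.finite_quotient_inf K₁ K₂, fun J hJ hle => ?_⟩
  have hJI₁ : J ≤ I₁ := hfa₁ J hJ (hle.trans inf_le_left)
  have hJI₂ : J ≤ I₂ := hfa₂ J hJ (hle.trans inf_le_right)
  exact (Submodule.eq_bot_iff J).2 fun x hx => hinj x (hJ.comul_mem_of_le hJI₁ hJI₂ hx)

theorem stmt3 (H : Type*) [Ring H] [HopfAlgebra ℂ H]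
    (I₁ I₂ : Submodule ℂ H) (hI₁ : IsHopfIdeal I₁) (hI₂ : IsHopfIdeal I₂)
    (hinj : ∀ x : H, Coalgebra.comul (R := ℂ) x ∈ subTensor I₁ ⊤ ⊔ subTensor ⊤ I₂ → x = 0)
    (K₁ : Submodule ℂ H) (hK₁ : IsTwoSidedIdealSub K₁) (hIK₁ : I₁ ≤ K₁)
    (hfd₁ : FiniteDimensional ℂ (H ⧸ K₁))
    (hfa₁ : ∀ J : Submodule ℂ H, IsHopfIdeal J → J ≤ K₁ → J ≤ I₁)
    (K₂ : Submodule ℂ H) (hK₂ : IsTwoSidedIdealSub K₂) (hIK₂ : I₂ ≤ K₂)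
    (hfd₂ : FiniteDimensional ℂ (H ⧸ K₂))
    (hfa₂ : ∀ J : Submodule ℂ H, IsHopfIdeal J → J ≤ K₂ → J ≤ I₂) :
    InnerLinear H :=
  stmt3_general H I₁ I₂ hinj K₁ hK₁ hfd₁ hfa₁ K₂ hK₂ hfd₂ hfa₂
end

section
/- Let H be a Hopf algebra over ℂ having a regular antipode. Then the following are equivalent: (1) H is inner linear; (2) there exists an algebra homomorphism π : H → A into a finite-dimensional ℂ-algebra A such that Ker(π) does not contain any non-zero Hopf ideal I with S(I) = I. -/
open scoped TensorProduct

section Regular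

variable {H : Type*} [Ring H] [HopfAlgebra ℂ H]

/-- `x ↦ Σ φ(x₍₁₎) x₍₂₎`. -/
noncomputable def lconv (φ : H →ₗ[ℂ] ℂ) : H →ₗ[ℂ] H :=
  (TensorProduct.lid ℂ H).toLinearMap ∘ₗ TensorProduct.map φ LinearMap.id ∘ₗ
    Coalgebra.comul (R := ℂ)

/-- `x ↦ Σ x₍₁₎ ψ(x₍₂₎)`. -/
noncomputable def rconv (ψ : H →ₗ[ℂ] ℂ) : H →ₗ[ℂ] H :=
  (TensorProduct.rid ℂ H).toLinearMap ∘ₗ TensorProduct.map LinearMap.id ψ ∘ₗ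
    Coalgebra.comul (R := ℂ)

/-- The convolution `Φ * id_H * Φ⁻¹ : x ↦ Σ Φ(x₍₁₎) x₍₂₎ Φ⁻¹(x₍₃₎)`,
where `Φ⁻¹ = Φ ∘ S`. -/
noncomputable def convConj (Φ : H →ₐ[ℂ] ℂ) : H →ₗ[ℂ] H :=
  rconv (Φ.toLinearMap ∘ₗ HopfAlgebra.antipode (R := ℂ)) ∘ₗ lconv Φ.toLinearMap

/-- A group-like element: `Δ(a) = a ⊗ a` and `ε(a) = 1`. -/
def IsGroupLikeElemHopf (a : H) : Prop :=
  Coalgebra.comul (R := ℂ) a = a ⊗ₜ[ℂ] a ∧ Coalgebra.counit (R := ℂ) a = 1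

/-- `H` has a regular antipode: there are a group-like `a ∈ H` (with `a⁻¹ = S(a)`), a character
`Φ : H → ℂ` and `m ≥ 1` with `S^{2m}(x) = a (Φ * id * Φ⁻¹)(x) a⁻¹` for all `x`. -/
def HasRegularAntipode (H : Type*) [Ring H] [HopfAlgebra ℂ H] : Prop :=
  ∃ (a : H) (Φ : H →ₐ[ℂ] ℂ) (m : ℕ), 1 ≤ m ∧ IsGroupLikeElemHopf a ∧
    ∀ x : H, (⇑(HopfAlgebra.antipode (R := ℂ) (A := H)))^[2 * m] x =
      a * convConj Φ x * HopfAlgebra.antipode (R := ℂ) a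

end Regular

/-- A finite-dimensional representation whose kernel contains no nonzero `S`-stable Hopf
ideal. -/
structure SStableInnerFaithfulFinDimRep (H : Type*) [Ring H] [HopfAlgebra ℂ H] where
  A : Type
  [ring : Ring A]
  [alg : Algebra ℂ A]
  findim : FiniteDimensional ℂ A
  π : H →ₐ[ℂ] A
  faithful : ∀ J : Submodule ℂ H, IsHopfIdeal J →
    Submodule.map (HopfAlgebra.antipode (R := ℂ)) J = J → (∀ x ∈ J, π x = 0) → J = ⊥

/-! (1 ⇒ 2): the left regular representation of `H` on `H ⧸ I` kills only elements of `I`.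

(2 ⇒ 1): take `I = ker π ∩ ker Φ`, which has finite codimension. A Hopf ideal `J ⊆ I` is
automatically `S`-stable: `Φ` and `Φ ∘ S` vanish on `J`, so the compositional inverse
`x ↦ Σ Φ(S x₍₁₎) x₍₂₎ Φ(x₍₃₎)` of `Φ * id * Φ⁻¹` maps `J` into `J`, and regularity writes every
`x ∈ J` as `S^{2m} w = S (S^{2m-1} w)` with `w ∈ J`. Hence `S(J) = J`, and `J = 0` by (2). -/

open Coalgebra HopfAlgebra TensorProduct WithConv LinearMap

section Convolution

variable {H : Type*} [Ring H] [HopfAlgebra ℂ H]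

theorem lconv_comp_lconv (f g : H →ₗ[ℂ] ℂ) :
    lconv f ∘ₗ lconv g = lconv (toConv g * toConv f).ofConv := by
  have hnat : comul (R := ℂ) ∘ₗ (TensorProduct.lid ℂ H).toLinearMap ∘ₗ map g id =
      (TensorProduct.lid ℂ _).toLinearMap ∘ₗ map g id ∘ₗ lTensor H comul := by
    ext x y; simp
  have hcollapse : (TensorProduct.lid ℂ H).toLinearMap ∘ₗ map f id ∘ₗ
      (TensorProduct.lid ℂ _).toLinearMap ∘ₗ map g id ∘ₗ (TensorProduct.assoc ℂ H H H).toLinearMap =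
      (TensorProduct.lid ℂ H).toLinearMap ∘ₗ map (mul' ℂ ℂ ∘ₗ map g f) id := by
    apply TensorProduct.ext_threefold; intro x y z; simp [mul_smul]
  calc lconv f ∘ₗ lconv g
      = (TensorProduct.lid ℂ H).toLinearMap ∘ₗ map f id ∘ₗ
          (comul ∘ₗ (TensorProduct.lid ℂ H).toLinearMap ∘ₗ map g id) ∘ₗ comul := by
        simp only [lconv, comp_assoc]
    _ = (TensorProduct.lid ℂ H).toLinearMap ∘ₗ map f id ∘ₗ (TensorProduct.lid ℂ _).toLinearMap ∘ₗ
          map g id ∘ₗ (TensorProduct.assoc ℂ H H H).toLinearMap ∘ₗ rTensor H comul ∘ₗ comul := by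
        rw [hnat]; simp only [comp_assoc, coassoc]
    _ = (TensorProduct.lid ℂ H).toLinearMap ∘ₗ map (mul' ℂ ℂ ∘ₗ map g f) id ∘ₗ
          rTensor H comul ∘ₗ comul := by
        simpa only [comp_assoc] using congrArg (· ∘ₗ rTensor H comul ∘ₗ comul) hcollapse
    _ = lconv (toConv g * toConv f).ofConv := by
        simp only [lconv, LinearMap.convMul_def, ofConv_toConv]
        rw [← comp_assoc comul (map g f), ← LinearMap.map_comp_rTensor (f' := comul), comp_assoc]

theorem rconv_comp_rconv (f g : H →ₗ[ℂ] ℂ) :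
    rconv f ∘ₗ rconv g = rconv (toConv f * toConv g).ofConv := by
  have hnat : comul (R := ℂ) ∘ₗ (TensorProduct.rid ℂ H).toLinearMap ∘ₗ map id g =
      (TensorProduct.rid ℂ _).toLinearMap ∘ₗ map id g ∘ₗ rTensor H comul := by
    ext x y; simp
  have hcollapse : (TensorProduct.rid ℂ H).toLinearMap ∘ₗ map id f ∘ₗ
      (TensorProduct.rid ℂ _).toLinearMap ∘ₗ map id g ∘ₗ
        (TensorProduct.assoc ℂ H H H).symm.toLinearMap =
      (TensorProduct.rid ℂ H).toLinearMap ∘ₗ map id (mul' ℂ ℂ ∘ₗ map f g) := by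
    apply TensorProduct.ext_threefold'; intro x y z; simp [mul_smul, smul_comm (f y)]
  calc rconv f ∘ₗ rconv g
      = (TensorProduct.rid ℂ H).toLinearMap ∘ₗ map id f ∘ₗ
          (comul ∘ₗ (TensorProduct.rid ℂ H).toLinearMap ∘ₗ map id g) ∘ₗ comul := by
        simp only [rconv, comp_assoc]
    _ = (TensorProduct.rid ℂ H).toLinearMap ∘ₗ map id f ∘ₗ (TensorProduct.rid ℂ _).toLinearMap ∘ₗ
          map id g ∘ₗ (TensorProduct.assoc ℂ H H H).symm.toLinearMap ∘ₗ lTensor H comul ∘ₗ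
            comul := by
        rw [hnat]; simp only [comp_assoc, coassoc_symm]
    _ = (TensorProduct.rid ℂ H).toLinearMap ∘ₗ map id (mul' ℂ ℂ ∘ₗ map f g) ∘ₗ
          lTensor H comul ∘ₗ comul := by
        simpa only [comp_assoc] using congrArg (· ∘ₗ lTensor H comul ∘ₗ comul) hcollapse
    _ = rconv (toConv f * toConv g).ofConv := by
        simp only [rconv, LinearMap.convMul_def, ofConv_toConv]
        rw [← comp_assoc comul (map f g), ← LinearMap.map_comp_lTensor (f := id) (g' := comul),
          comp_assoc]

theorem lconv_one : lconv (1 : WithConv (H →ₗ[ℂ] ℂ)).ofConv = LinearMap.id := by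
  ext x
  simp [lconv, LinearMap.convOne_def, ← rTensor_def]

theorem rconv_one : rconv (1 : WithConv (H →ₗ[ℂ] ℂ)).ofConv = LinearMap.id := by
  ext x
  simp [rconv, LinearMap.convOne_def, ← lTensor_def]

theorem toConv_comp_antipode_mul_toConv (Φ : H →ₐ[ℂ] ℂ) :
    toConv (Φ.toLinearMap ∘ₗ antipode ℂ) * toConv Φ.toLinearMap = 1 := by
  calc toConv (Φ.toLinearMap ∘ₗ antipode ℂ) * toConv Φ.toLinearMap
      = toConv (Φ.toLinearMap ∘ₗ (toConv (antipode ℂ (A := H)) * toConv LinearMap.id).ofConv) := by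
        rw [algHom_comp_convMul_distrib]; rfl
    _ = 1 := by
        rw [antipode_mul_id]; ext; simp

theorem convConj_lconv_rconv (Φ : H →ₐ[ℂ] ℂ) (x : H) :
    convConj Φ (lconv (Φ.toLinearMap ∘ₗ antipode ℂ) (rconv Φ.toLinearMap x)) = x := by
  have hl := congr($(lconv_comp_lconv Φ.toLinearMap (Φ.toLinearMap ∘ₗ antipode ℂ))
    (rconv Φ.toLinearMap x))
  have hr := congr($(rconv_comp_rconv (Φ.toLinearMap ∘ₗ antipode ℂ) Φ.toLinearMap) x)
  simp only [toConv_comp_antipode_mul_toConv, lconv_one, rconv_one, comp_apply, id_apply]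
    at hl hr
  rw [convConj, comp_apply, hl, hr]

end Convolution

section HopfIdeal

variable {H : Type*} [Ring H] [HopfAlgebra ℂ H]

theorem subTensor_le_iff {P Q : Submodule ℂ H} {T : Submodule ℂ (H ⊗[ℂ] H)} :
    subTensor P Q ≤ T ↔ ∀ p ∈ P, ∀ q ∈ Q, p ⊗ₜ[ℂ] q ∈ T := by
  rw [subTensor, ← mapIncl, range_mapIncl, Submodule.map₂_le]
  rfl

theorem lconv_mem {J : Submodule ℂ H}
    (hJ : ∀ x ∈ J, comul (R := ℂ) x ∈ subTensor J ⊤ ⊔ subTensor ⊤ J)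
    {f : H →ₗ[ℂ] ℂ} (hf : ∀ u ∈ J, f u = 0) {x : H} (hx : x ∈ J) : lconv f x ∈ J := by
  have hle : subTensor J ⊤ ⊔ subTensor ⊤ J ≤
      J.comap ((TensorProduct.lid ℂ H).toLinearMap ∘ₗ map f id) :=
    sup_le (subTensor_le_iff.2 fun p hp q _ => by simp [hf p hp])
      (subTensor_le_iff.2 fun p _ q hq => by simpa using J.smul_mem (f p) hq)
  exact hle (hJ x hx)

theorem rconv_mem {J : Submodule ℂ H}
    (hJ : ∀ x ∈ J, comul (R := ℂ) x ∈ subTensor J ⊤ ⊔ subTensor ⊤ J)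
    {f : H →ₗ[ℂ] ℂ} (hf : ∀ u ∈ J, f u = 0) {x : H} (hx : x ∈ J) : rconv f x ∈ J := by
  have hle : subTensor J ⊤ ⊔ subTensor ⊤ J ≤
      J.comap ((TensorProduct.rid ℂ H).toLinearMap ∘ₗ map id f) :=
    sup_le (subTensor_le_iff.2 fun p hp q _ => by simpa using J.smul_mem (f q) hp)
      (subTensor_le_iff.2 fun p _ q hq => by simp [hf q hq])
  exact hle (hJ x hx)

theorem IsGroupLikeElemHopf.isGroupLikeElem {a : H} (ha : IsGroupLikeElemHopf a) :
    IsGroupLikeElem ℂ a :=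
  ⟨ha.2, ha.1⟩

theorem IsHopfIdeal.antipode_iterate_mem {J : Submodule ℂ H} (hJ : IsHopfIdeal J) (n : ℕ)
    {x : H} (hx : x ∈ J) : (⇑(antipode ℂ (A := H)))^[n] x ∈ J :=
  Set.MapsTo.iterate (f := ⇑(antipode ℂ (A := H))) (s := J) hJ.antipode_mem n hx

theorem IsHopfIdeal.map_antipode_eq {a : H} {Φ : H →ₐ[ℂ] ℂ} {m : ℕ} (hm : 1 ≤ m)
    (ha : IsGroupLikeElemHopf a)
    (hS : ∀ x : H, (⇑(antipode ℂ (A := H)))^[2 * m] x = a * convConj Φ x * antipode ℂ a)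
    {J : Submodule ℂ H} (hJ : IsHopfIdeal J) (hΦ : ∀ x ∈ J, Φ x = 0) :
    J.map (antipode ℂ) = J := by
  refine le_antisymm (Submodule.map_le_iff_le_comap.2 hJ.antipode_mem) fun x hx => ?_
  -- `convConj Φ w = S a * x * a`, hence `S^{2m} w = x`
  set w := lconv (Φ.toLinearMap ∘ₗ antipode ℂ) (rconv Φ.toLinearMap (antipode ℂ a * x * a))
  have hw : w ∈ J :=
    lconv_mem hJ.comul_mem (fun u hu => hΦ _ (hJ.antipode_mem u hu))
      (rconv_mem hJ.comul_mem hΦ (hJ.mul_mem_right a (hJ.mul_mem_left _ hx)))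
  refine ⟨_, hJ.antipode_iterate_mem (2 * m - 1) hw, ?_⟩
  have h2m : 2 * m - 1 + 1 = 2 * m := by omega
  rw [← Function.iterate_succ_apply' (antipode ℂ : H → H), Nat.succ_eq_add_one, h2m, hS,
    convConj_lconv_rconv]
  simp [← mul_assoc, mul_assoc _ a, ha.isGroupLikeElem.mul_antipode_cancel]

theorem IsTwoSidedIdealSub.ker {B : Type*} [Ring B] [Algebra ℂ B] (f : H →ₐ[ℂ] B) :
    IsTwoSidedIdealSub (ker f.toLinearMap) where
  mul_mem_left x a ha := by simp_all
  mul_mem_right a x ha := by simp_all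

def IsTwoSidedIdealSub.toLeftIdeal {I : Submodule ℂ H} (hI : IsTwoSidedIdealSub I) :
    Submodule H H where
  __ := I
  smul_mem' x _ ha := hI.mul_mem_left x ha

end HopfIdeal

section LeftIdeal

variable {H : Type*} [Ring H] [Algebra ℂ H]

theorem exists_algHom_matrix_ker_le (L : Submodule H H) [FiniteDimensional ℂ (H ⧸ L)] :
    ∃ (n : ℕ) (π : H →ₐ[ℂ] Matrix (Fin n) (Fin n) ℂ), ∀ x, π x = 0 → x ∈ L := by
  let b := Module.finBasis ℂ (H ⧸ L)
  refine ⟨_, (LinearMap.toMatrixAlgEquiv b).toAlgHom.comp (Algebra.lsmul ℂ ℂ (H ⧸ L)), ?_⟩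
  intro x hx
  have h : Algebra.lsmul ℂ ℂ (H ⧸ L) x = 0 := by simpa using hx
  have hx1 := LinearMap.congr_fun h (Submodule.Quotient.mk 1)
  simpa [← Submodule.Quotient.mk_smul] using hx1

end LeftIdeal

section

variable {H : Type*} [Ring H] [HopfAlgebra ℂ H]

theorem innerLinear_of_rep (hreg : HasRegularAntipode H) (ρ : SStableInnerFaithfulFinDimRep H) :
    InnerLinear H := by
  obtain ⟨a, Φ, m, hm, ha, hS⟩ := hreg
  obtain ⟨A, _, π, hπ⟩ := ρ
  let f := π.prod Φ
  refine ⟨ker f.toLinearMap, .ker f, Submodule.CoFG.ker _, fun J hJ hJf => ?_⟩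
  have hvanish : ∀ x ∈ J, π x = 0 ∧ Φ x = 0 := fun x hx => Prod.ext_iff.1 (hJf hx)
  exact hπ J hJ (hJ.map_antipode_eq hm ha hS fun x hx => (hvanish x hx).2)
    fun x hx => (hvanish x hx).1

theorem nonempty_rep_of_innerLinear (h : InnerLinear H) :
    Nonempty (SStableInnerFaithfulFinDimRep H) := by
  obtain ⟨I, hI, hfin, hmax⟩ := h
  have : FiniteDimensional ℂ (H ⧸ hI.toLeftIdeal.restrictScalars ℂ) := hfin
  have : FiniteDimensional ℂ (H ⧸ hI.toLeftIdeal) :=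
    Module.Finite.equiv (Submodule.Quotient.restrictScalarsEquiv ℂ hI.toLeftIdeal)
  obtain ⟨n, π, hπ⟩ := exists_algHom_matrix_ker_le hI.toLeftIdeal
  exact ⟨⟨Matrix (Fin n) (Fin n) ℂ, inferInstance, π,
    fun J hJ _ hJπ => hmax J hJ fun x hx => hπ x (hJπ x hx)⟩⟩

end

theorem stmt8 (H : Type*) [Ring H] [HopfAlgebra ℂ H] (hreg : HasRegularAntipode H) :
    InnerLinear H ↔ Nonempty (SStableInnerFaithfulFinDimRep H) :=
  ⟨nonempty_rep_of_innerLinear, fun ⟨ρ⟩ => innerLinear_of_rep hreg ρ⟩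
end
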